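/- arXiv:2309.10207 — 3 statements merged into one kernel-verified Lean document; each statement's English description precedes it below -/
import Mathlib

section
/- There is an absolute constant c > 0 such that for every prime p and every positive divisor m of p−1 with d = (p−1)/m ≥ 3 odd, the multiplicative subgroup G_m of (Z/pZ)^* of order d satisfies θ(m,p) ≥ c·p^{1/φ(d)}, where φ is Euler's totient function. -/
/-! If `λ ≠ 1` has order `e` and `r ≡ λ s (mod p)` with `p ∤ s`, then `r / s ≡ λ` is a root of the
cyclotomic polynomial `Φₑ` modulo `p`, so `p` divides the integer `N = s ^ φ(e) Φₑ(r / s)`. When `e`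
is odd, `Φₑ` is irreducible over `ℚ` of degree `φ(e) ≥ 2`, hence has no rational root and `N ≠ 0`;
as all roots of `Φₑ` lie on the unit circle, `|N| ≤ (r + s) ^ φ(e)`. Therefore
`p ≤ (r + s) ^ φ(e) ≤ (r s + 1) ^ φ(d)`, so `θ + 1 ≥ p ^ (1 / φ(d))`, and `θ ≥ 1` gives the bound
with `c = 1 / 2`. -/

open scoped Classical

noncomputable section

/-- `ρ(λ,p) = min { r·s : r, s positive integers with r ≡ λ·s (mod p) }`. -/
def rho (p : ℕ) (lam : (ZMod p)ˣ) : ℕ :=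
  sInf {n : ℕ | ∃ r s : ℕ, 0 < r ∧ 0 < s ∧ (r : ZMod p) = (lam : ZMod p) * s ∧ n = r * s}

/-- `θ(m,p) = min_{λ ∈ G_m, λ ≠ 1} ρ(λ,p)`, where `G_m = {λ : λ ^ d = 1}` and `d = (p-1)/m`. -/
def theta (p d : ℕ) : ℕ :=
  sInf {n : ℕ | ∃ lam : (ZMod p)ˣ, lam ^ d = 1 ∧ lam ≠ 1 ∧ n = rho p lam}

open Polynomial

def cyclotomicForm (n : ℕ) (a b : ℤ) : ℤ :=
  MvPolynomial.eval ![a, b] ((cyclotomic n ℤ).homogenize n.totient)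

theorem cyclotomicForm_cast {K : Type*} [Field K] (n : ℕ) (a b : ℤ) (hb : (b : K) ≠ 0) :
    (cyclotomicForm n a b : K) = (cyclotomic n K).eval ((a : K) / b) * (b : K) ^ n.totient := by
  have h := MvPolynomial.eval₂_comp (Int.castRingHom K) ![a, b]
    ((cyclotomic n ℤ).homogenize n.totient)
  rw [← MvPolynomial.eval_map, ← homogenize_map, map_cyclotomic,
    eval_homogenize (natDegree_cyclotomic n K).le _ (by simpa using hb)] at h
  simpa [cyclotomicForm] using h

theorem cyclotomicForm_ne_zero {n : ℕ} (hn : 0 < n) (hφ : n.totient ≠ 1) (a : ℤ) {b : ℤ}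
    (hb : b ≠ 0) : cyclotomicForm n a b ≠ 0 := by
  intro h
  have hbℚ : (b : ℚ) ≠ 0 := by exact_mod_cast hb
  have hroot := cyclotomicForm_cast n a b hbℚ
  rw [h, Int.cast_zero, eq_comm, mul_eq_zero, or_iff_left (pow_ne_zero _ hbℚ)] at hroot
  have hdeg := degree_eq_one_of_irreducible_of_root (cyclotomic.irreducible_rat hn) hroot
  rw [degree_cyclotomic] at hdeg
  exact hφ (by exact_mod_cast hdeg)

theorem norm_eval_cyclotomic_le (n : ℕ) (z : ℂ) :
    ‖(cyclotomic n ℂ).eval z‖ ≤ (‖z‖ + 1) ^ n.totient := by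
  rcases n.eq_zero_or_pos with rfl | hn
  · simp
  have hζ := Complex.isPrimitiveRoot_exp n hn.ne'
  rw [cyclotomic_eq_prod_X_sub_primitiveRoots hζ, eval_prod, norm_prod, ← hζ.card_primitiveRoots,
    ← Finset.prod_const]
  refine Finset.prod_le_prod (fun _ _ => norm_nonneg _) fun μ hμ => ?_
  rw [eval_sub, eval_X, eval_C, ← ((mem_primitiveRoots hn).mp hμ).norm'_eq_one hn.ne']
  exact norm_sub_le z μ

theorem abs_cyclotomicForm_le (n : ℕ) (a : ℤ) {b : ℤ} (hb : b ≠ 0) :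
    |cyclotomicForm n a b| ≤ (|a| + |b|) ^ n.totient := by
  have hbℂ : (b : ℂ) ≠ 0 := by exact_mod_cast hb
  have h := congrArg norm (cyclotomicForm_cast n a b hbℂ)
  rw [norm_mul, norm_pow, Complex.norm_intCast, Complex.norm_intCast] at h
  suffices (|cyclotomicForm n a b| : ℝ) ≤ (|(a : ℝ)| + |(b : ℝ)|) ^ n.totient by exact_mod_cast this
  calc (|cyclotomicForm n a b| : ℝ) ≤ (‖(a : ℂ) / b‖ + 1) ^ n.totient * |(b : ℝ)| ^ n.totient := by
        rw [h]; gcongr; exact norm_eval_cyclotomic_le n _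
    _ = (|(a : ℝ)| + |(b : ℝ)|) ^ n.totient := by
        rw [← mul_pow, norm_div, Complex.norm_intCast, Complex.norm_intCast]
        field_simp

theorem prime_dvd_cyclotomicForm {p : ℕ} [Fact p.Prime] {n : ℕ} (hn : 0 < n) {ζ : ZMod p}
    (hζ : IsPrimitiveRoot ζ n) {a b : ℤ} (hb : (b : ZMod p) ≠ 0) (hab : (a : ZMod p) = ζ * b) :
    (p : ℤ) ∣ cyclotomicForm n a b := by
  rw [← ZMod.intCast_zmod_eq_zero_iff_dvd, cyclotomicForm_cast n a b hb, hab,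
    mul_div_cancel_right₀ _ hb, (hζ.isRoot_cyclotomic hn).eq_zero, zero_mul]

theorem totient_orderOf_ne_one_of_pow_eq_one {G : Type*} [Monoid G] {d : ℕ} (hd : Odd d) {x : G}
    (hx : x ^ d = 1) (hx1 : x ≠ 1) : (orderOf x).totient ≠ 1 := by
  have hodd : Odd (orderOf x) := hd.of_dvd_nat (orderOf_dvd_of_pow_eq_one hx)
  rw [Ne, Nat.totient_eq_one_iff]
  rintro (h | h)
  · exact hx1 (orderOf_eq_one_iff.mp h)
  · exact Nat.not_odd_iff_even.mpr (h ▸ even_two) hodd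

theorem exists_pow_eq_one_ne_one {G : Type*} [Group G] [Fintype G] {d : ℕ}
    (hd : d ∣ Fintype.card G) (hd1 : d ≠ 1) : ∃ x : G, x ^ d = 1 ∧ x ≠ 1 := by
  have hq := Nat.minFac_prime hd1
  have := Fact.mk hq
  obtain ⟨x, hx⟩ := exists_prime_orderOf_dvd_card d.minFac ((Nat.minFac_dvd d).trans hd)
  refine ⟨x, orderOf_dvd_iff_pow_eq_one.mp (hx ▸ Nat.minFac_dvd d), fun h => ?_⟩
  rw [h, orderOf_one] at hx
  exact hq.one_lt.ne hx

section

variable {p : ℕ} [Fact p.Prime]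

theorem prime_le_add_pow_totient_orderOf {lam : (ZMod p)ˣ} (hlam : (orderOf lam).totient ≠ 1)
    {r s : ℕ} (hs : 0 < s) (h : (r : ZMod p) = lam * s) :
    p ≤ (r + s) ^ (orderOf lam).totient := by
  set e := orderOf lam
  have he : 0 < e := orderOf_pos lam
  by_cases hps : (s : ZMod p) = 0
  · have : p ≤ s := Nat.le_of_dvd hs ((ZMod.natCast_eq_zero_iff _ _).mp hps)
    calc p ≤ r + s := by omega
      _ ≤ (r + s) ^ e.totient := Nat.le_self_pow (Nat.totient_pos.mpr he).ne' _
  have hζ : IsPrimitiveRoot (lam : ZMod p) e :=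
    IsPrimitiveRoot.coe_units_iff.mpr (IsPrimitiveRoot.orderOf lam)
  have hdvd := prime_dvd_cyclotomicForm he hζ (a := r) (b := s) (by exact_mod_cast hps)
    (by exact_mod_cast h)
  have hne := cyclotomicForm_ne_zero he hlam r (b := s) (by omega)
  have hle := Int.le_of_dvd (abs_pos.mpr hne) ((dvd_abs _ _).mpr hdvd)
  have := hle.trans (abs_cyclotomicForm_le e r (b := s) (by omega))
  simp only [Nat.abs_cast] at this
  exact_mod_cast this

theorem exists_rho_eq (lam : (ZMod p)ˣ) :
    ∃ r s : ℕ, 0 < r ∧ 0 < s ∧ (r : ZMod p) = lam * s ∧ rho p lam = r * s := by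
  have hS : {n : ℕ | ∃ r s : ℕ, 0 < r ∧ 0 < s ∧ (r : ZMod p) = lam * s ∧ n = r * s}.Nonempty :=
    ⟨_, (lam : ZMod p).val, 1, ZMod.val_pos.mpr lam.ne_zero, one_pos, by simp, rfl⟩
  exact Nat.sInf_mem hS

theorem one_le_rho (lam : (ZMod p)ˣ) : 1 ≤ rho p lam := by
  obtain ⟨r, s, hr, hs, -, hρ⟩ := exists_rho_eq lam
  rw [hρ]
  exact Nat.mul_pos hr hs

theorem prime_le_rho_add_one_pow_totient {d : ℕ} (hd : Odd d) {lam : (ZMod p)ˣ}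
    (hlam : lam ^ d = 1) (hlam1 : lam ≠ 1) : p ≤ (rho p lam + 1) ^ d.totient := by
  obtain ⟨r, s, hr, hs, hrs, hρ⟩ := exists_rho_eq lam
  have hφ : (orderOf lam).totient ≤ d.totient :=
    Nat.le_of_dvd (Nat.totient_pos.mpr hd.pos)
      (Nat.totient_dvd_of_dvd (orderOf_dvd_of_pow_eq_one hlam))
  calc p ≤ (r + s) ^ (orderOf lam).totient :=
        prime_le_add_pow_totient_orderOf (totient_orderOf_ne_one_of_pow_eq_one hd hlam hlam1) hs hrs
    _ ≤ (r * s + 1) ^ (orderOf lam).totient := Nat.pow_le_pow_left (by nlinarith) _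
    _ ≤ (rho p lam + 1) ^ d.totient := by rw [hρ]; exact Nat.pow_le_pow_right (by omega) hφ

theorem exists_theta_eq {d : ℕ} (hd : d ∣ p - 1) (hd1 : d ≠ 1) :
    ∃ lam : (ZMod p)ˣ, lam ^ d = 1 ∧ lam ≠ 1 ∧ theta p d = rho p lam := by
  obtain ⟨x, hx, hx1⟩ := exists_pow_eq_one_ne_one (G := (ZMod p)ˣ) (by rwa [ZMod.card_units]) hd1
  have hS : {n : ℕ | ∃ lam : (ZMod p)ˣ, lam ^ d = 1 ∧ lam ≠ 1 ∧ n = rho p lam}.Nonempty :=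
    ⟨_, x, hx, hx1, rfl⟩
  exact Nat.sInf_mem hS

end

/-- Lemma (lower bound for `θ(m,p)`): there is an absolute constant `c > 0` such that for
every prime `p` and positive divisor `m` of `p-1` with `d = (p-1)/m ≥ 3` odd, one has
`θ(m,p) ≥ c · p^{1/φ(d)}`. -/
theorem theta_lower_bound :
    ∃ c : ℝ, 0 < c ∧ ∀ p : ℕ, p.Prime →
      ∀ m : ℕ, 0 < m → m ∣ p - 1 → Odd ((p - 1) / m) → 3 ≤ (p - 1) / m →
        c * (p : ℝ) ^ ((Nat.totient ((p - 1) / m) : ℝ))⁻¹ ≤ (theta p ((p - 1) / m) : ℝ) := by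
  refine ⟨1 / 2, by norm_num, fun p hp m _ hm hodd hd3 => ?_⟩
  have := Fact.mk hp
  set d := (p - 1) / m
  obtain ⟨lam, hlam, hlam1, hθ⟩ := exists_theta_eq (Nat.div_dvd_of_dvd hm) (by omega : d ≠ 1)
  have hθ1 : (1 : ℝ) ≤ theta p d := by exact_mod_cast hθ ▸ one_le_rho lam
  have hφ : (0 : ℝ) < d.totient := by exact_mod_cast Nat.totient_pos.mpr hodd.pos
  have hroot : (p : ℝ) ^ (d.totient : ℝ)⁻¹ ≤ theta p d + 1 := by
    rw [Real.rpow_inv_le_iff_of_pos (by positivity) (by positivity) hφ, Real.rpow_natCast]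
    exact_mod_cast hθ ▸ prime_le_rho_add_one_pow_totient hodd hlam hlam1
  linarith
end
end

section
/- There is an absolute constant C > 0 such that for all reals D, R ≥ 2, the set E(D,R) is finite and #E(D,R) ≤ C·D²·R·(log R)²/log D. -/
open scoped Classical

noncomputable section

/-- `E(D,R)`: the set of primes `p` for which there is `λ ∈ (ZMod p)ˣ` of multiplicative
order `e` with `3 ≤ e < D` and `ρ(λ,p) < R`. -/
def badPrimes (D R : ℝ) : Set ℕ :=
  {p | p.Prime ∧ ∃ lam : (ZMod p)ˣ,
    3 ≤ orderOf lam ∧ (orderOf lam : ℝ) < D ∧ (rho p lam : ℝ) < R}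

lemma one_le_log_three' : (1:ℝ) ≤ Real.log 3 := by
  rw [← Real.log_exp 1]
  exact Real.log_le_log (Real.exp_pos 1) (by nlinarith [Real.exp_one_lt_d9])

lemma div_log_mono' {x y : ℝ} (hx : 3 ≤ x) (hxy : x ≤ y) :
    x / Real.log x ≤ y / Real.log y := by
  have hlx : (1:ℝ) ≤ Real.log x := one_le_log_three'.trans (Real.log_le_log (by norm_num) hx)
  have hly : (0:ℝ) < Real.log y :=
    lt_of_lt_of_le one_pos (hlx.trans (Real.log_le_log (by linarith) hxy))
  have hx0 : (0:ℝ) < x := by linarith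
  have hy0 : (0:ℝ) < y := by linarith
  rw [div_le_div_iff₀ (by linarith) hly]
  have h1 : Real.log y = Real.log x + Real.log (y / x) := by
    rw [← Real.log_mul hx0.ne' (by positivity)]
    congr 1; field_simp
  have h2 : Real.log (y / x) ≤ y / x - 1 := Real.log_le_sub_one_of_pos (by positivity)
  have hd1 : (1:ℝ) ≤ y / x := (one_le_div hx0).mpr hxy
  have h3 : Real.log y ≤ (y / x) * Real.log x := by
    calc Real.log y ≤ Real.log x + (y/x - 1) := by rw [h1]; linarith
    _ ≤ Real.log x + (y/x - 1) * Real.log x := by nlinarith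
    _ = (y/x) * Real.log x := by ring
  calc y * Real.log x = x * ((y/x) * Real.log x) := by field_simp
  _ ≥ x * Real.log y := by nlinarith

lemma omega_bound' {N e : ℕ} (hN : N ≠ 0) (he : 1 ≤ e) :
    (((N.primeFactors.filter (fun p => e < p)).card : ℝ)) * Real.log e ≤ Real.log N := by
  set S := N.primeFactors.filter (fun p => e < p) with hS
  have h1 : e ^ S.card ≤ N := by
    calc e ^ S.card = ∏ _p ∈ S, e := by rw [Finset.prod_const]
    _ ≤ ∏ p ∈ S, p :=
      Finset.prod_le_prod (fun i _ => Nat.zero_le e)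
        (fun p hp => ((Finset.mem_filter.mp hp).2).le)
    _ ≤ N := Nat.le_of_dvd (Nat.pos_of_ne_zero hN)
        ((Finset.prod_dvd_prod_of_subset _ _ _ (Finset.filter_subset _ _)).trans
          (Nat.prod_primeFactors_dvd N))
  have h2 : ((e:ℝ)) ^ S.card ≤ (N:ℝ) := by exact_mod_cast h1
  have h3 := Real.log_le_log (by positivity) h2
  rwa [Real.log_pow] at h3

lemma pairs_card_le' (M : ℕ) :
    ((((Finset.Icc 1 M) ×ˢ (Finset.Icc 1 M)).filter
      (fun q : ℕ × ℕ => q.1 * q.2 ≤ M ∧ q.1 ≠ q.2)).card : ℝ) ≤ (M:ℝ) * (1 + Real.log M) := by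
  classical
  set P := (((Finset.Icc 1 M) ×ˢ (Finset.Icc 1 M)).filter
      (fun q : ℕ × ℕ => q.1 * q.2 ≤ M ∧ q.1 ≠ q.2)) with hP
  have hsub : P ⊆ (Finset.Icc 1 M).biUnion (fun r => {r} ×ˢ Finset.Icc 1 (M / r)) := by
    intro q hq
    rw [hP, Finset.mem_filter, Finset.mem_product] at hq
    obtain ⟨⟨hq1, hq2⟩, hq3, _⟩ := hq
    rw [Finset.mem_biUnion]
    refine ⟨q.1, hq1, ?_⟩
    rw [Finset.mem_product, Finset.mem_singleton]
    refine ⟨rfl, Finset.mem_Icc.mpr ⟨(Finset.mem_Icc.mp hq2).1, ?_⟩⟩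
    rw [Nat.le_div_iff_mul_le (Finset.mem_Icc.mp hq1).1]
    rw [mul_comm] at hq3; exact hq3
  have hc : P.card ≤ ∑ r ∈ Finset.Icc 1 M, (M / r) := by
    calc P.card ≤ ((Finset.Icc 1 M).biUnion (fun r => {r} ×ˢ Finset.Icc 1 (M / r))).card :=
      Finset.card_le_card hsub
    _ ≤ ∑ r ∈ Finset.Icc 1 M, ({r} ×ˢ Finset.Icc 1 (M / r)).card := Finset.card_biUnion_le
    _ = ∑ r ∈ Finset.Icc 1 M, (M / r) := by
        refine Finset.sum_congr rfl (fun r _ => ?_)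
        rw [Finset.card_product, Finset.card_singleton, one_mul, Nat.card_Icc]
        exact Nat.add_sub_cancel _ _
  have hc2 : (P.card : ℝ) ≤ ∑ r ∈ Finset.Icc 1 M, (M:ℝ) / r := by
    calc (P.card : ℝ) ≤ ((∑ r ∈ Finset.Icc 1 M, (M / r) : ℕ) : ℝ) := by exact_mod_cast hc
    _ = ∑ r ∈ Finset.Icc 1 M, ((M / r : ℕ) : ℝ) := by push_cast; ring
    _ ≤ ∑ r ∈ Finset.Icc 1 M, (M:ℝ) / r := Finset.sum_le_sum (fun r _ => Nat.cast_div_le)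
  have hh : ∑ r ∈ Finset.Icc 1 M, (M:ℝ) / r = (M:ℝ) * ((harmonic M : ℚ) : ℝ) := by
    rw [harmonic_eq_sum_Icc]
    push_cast
    rw [Finset.mul_sum]
    exact Finset.sum_congr rfl (fun r _ => by rw [div_eq_mul_inv])
  calc (P.card : ℝ) ≤ (M:ℝ) * ((harmonic M : ℚ) : ℝ) := by rw [← hh]; exact hc2
  _ ≤ (M:ℝ) * (1 + Real.log M) := by
      have := harmonic_le_one_add_log M
      have hM0 : (0:ℝ) ≤ (M:ℝ) := by positivity
      nlinarith

lemma mem_bad' {D R : ℝ} {p : ℕ} (hp : p ∈ badPrimes D R) :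
    p * p ≤ ⌊R⌋₊ ∨ ∃ e r s : ℕ, 3 ≤ e ∧ (e:ℝ) < D ∧ 1 ≤ r ∧ 1 ≤ s ∧ r * s ≤ ⌊R⌋₊ ∧ r ≠ s ∧
      e < p ∧ p ∣ ((r:ℤ)^e - (s:ℤ)^e).natAbs := by
  obtain ⟨hpp, lam, he3, heD, hrho⟩ := hp
  haveI : Fact p.Prime := ⟨hpp⟩
  haveI : NeZero p := ⟨hpp.ne_zero⟩
  set e := orderOf lam with hedef
  have hne : {n : ℕ | ∃ r s : ℕ, 0 < r ∧ 0 < s ∧ (r : ZMod p) = (lam : ZMod p) * s ∧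
      n = r * s}.Nonempty := by
    refine ⟨(lam : ZMod p).val, (lam : ZMod p).val, 1, ?_, one_pos, ?_, (mul_one _).symm⟩
    · exact ZMod.val_pos.mpr (Units.ne_zero lam)
    · rw [Nat.cast_one, mul_one]
      exact (ZMod.natCast_val _).trans (ZMod.cast_id _ _)
  have hmem : rho p lam ∈ {n : ℕ | ∃ r s : ℕ, 0 < r ∧ 0 < s ∧
      (r : ZMod p) = (lam : ZMod p) * s ∧ n = r * s} := Nat.sInf_mem hne
  obtain ⟨r, s, hr, hs, hcong, hn⟩ := hmem
  have hrsR : r * s ≤ ⌊R⌋₊ := Nat.le_floor (by rw [← hn]; exact_mod_cast hrho.le)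
  have hp2 : 2 ≤ p := hpp.two_le
  have hedvd : e ∣ p - 1 := by
    have := orderOf_dvd_card (x := lam); rwa [ZMod.card_units] at this
  have hep : e < p := lt_of_le_of_lt (Nat.le_of_dvd (by omega) hedvd) (by omega)
  have hlampow : ((lam : ZMod p))^e = 1 := by
    rw [← Units.val_pow_eq_pow_val, hedef, pow_orderOf_eq_one, Units.val_one]
  have hpow : ((r : ZMod p))^e = ((s : ZMod p))^e := by
    rw [hcong, mul_pow, hlampow, one_mul]
  by_cases hrs : r = s
  · left
    subst hrs
    have hlam1 : (lam : ZMod p) ≠ 1 := by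
      intro h
      have h1 : lam = 1 := Units.ext h
      rw [h1, orderOf_one] at hedef
      omega
    have h0 : (r : ZMod p) - (lam : ZMod p) * r = 0 := sub_eq_zero_of_eq hcong
    have h1 : (r : ZMod p) * (1 - (lam : ZMod p)) = 0 := by linear_combination h0
    rcases mul_eq_zero.mp h1 with h2 | h2
    · have h3 : p ∣ r := (ZMod.natCast_eq_zero_iff r p).mp h2
      have h4 : p ≤ r := Nat.le_of_dvd hr h3
      calc p * p ≤ r * r := Nat.mul_le_mul h4 h4
      _ ≤ ⌊R⌋₊ := hrsR
    · exact absurd ((sub_eq_zero.mp h2).symm) hlam1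
  · right
    refine ⟨e, r, s, he3, heD, hr, hs, hrsR, hrs, hep, ?_⟩
    have h0 : (((r:ℤ)^e - (s:ℤ)^e : ℤ) : ZMod p) = 0 := by push_cast; rw [hpow]; ring
    have h1 : (p:ℤ) ∣ ((r:ℤ)^e - (s:ℤ)^e) := (ZMod.intCast_zmod_eq_zero_iff_dvd _ p).mp h0
    have h2 := Int.natAbs_dvd_natAbs.mpr h1
    simpa using h2

lemma natAbs_pow_sub_ne_zero' {r s e : ℕ} (hrs : r ≠ s) (he : 1 ≤ e) :
    ((r:ℤ)^e - (s:ℤ)^e).natAbs ≠ 0 := by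
  intro h0
  apply hrs
  have h1 : (r:ℤ)^e - (s:ℤ)^e = 0 := Int.natAbs_eq_zero.mp h0
  have h2 : (r:ℤ)^e = (s:ℤ)^e := by linarith [sub_eq_zero.mp h1]
  have h3 : r ^ e = s ^ e := by exact_mod_cast h2
  exact Nat.pow_left_injective (Nat.one_le_iff_ne_zero.mp he) h3

set_option maxHeartbeats 1000000

/-- Lemma (bound for the exceptional set of primes): there is an absolute constant `C > 0`
such that for all reals `D, R ≥ 2`, the set `E(D,R)` is finite of cardinality at most
`C D² R (log R)² / log D`. -/
theorem badPrimes_finite_card_bound :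
    ∃ C : ℝ, 0 < C ∧ ∀ D R : ℝ, 2 ≤ D → 2 ≤ R →
      (badPrimes D R).Finite ∧
      ((badPrimes D R).ncard : ℝ) ≤ C * D ^ 2 * R * (Real.log R) ^ 2 / Real.log D := by
  classical
  refine ⟨100, by norm_num, fun D R hD hR => ?_⟩
  set M := ⌊R⌋₊ with hMdef
  set K := ⌈D⌉₊ with hKdef
  set P : Finset (ℕ × ℕ) := ((Finset.Icc 1 M) ×ˢ (Finset.Icc 1 M)).filter
      (fun q : ℕ × ℕ => q.1 * q.2 ≤ M ∧ q.1 ≠ q.2) with hPdef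
  set F : ℕ × ℕ × ℕ → Finset ℕ := fun t =>
      (((t.2.1:ℤ)^t.1 - (t.2.2:ℤ)^t.1).natAbs.primeFactors.filter (fun p => t.1 < p)) with hFdef
  set B : Finset ℕ := ((Finset.Ico 3 K) ×ˢ P).biUnion F ∪ Finset.range (Nat.sqrt M + 1)
    with hBdef
  have hsub : badPrimes D R ⊆ ↑B := by
    intro p hp
    have hpp : p.Prime := hp.1
    rcases mem_bad' hp with h | ⟨e, r, s, he3, heD, hr, hs, hrsM, hrs, hep, hdvd⟩
    · have hsq : p ≤ Nat.sqrt M := Nat.le_sqrt.mpr h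
      simp only [hBdef, Finset.coe_union, Set.mem_union, Finset.mem_coe, Finset.mem_range]
      right; omega
    · simp only [hBdef, Finset.coe_union, Set.mem_union, Finset.mem_coe]
      left
      rw [Finset.mem_biUnion]
      refine ⟨(e, (r, s)), ?_, ?_⟩
      · rw [Finset.mem_product, Finset.mem_Ico]
        refine ⟨⟨he3, Nat.lt_ceil.mpr heD⟩, ?_⟩
        rw [hPdef, Finset.mem_filter, Finset.mem_product]
        have hrM : r ≤ M := le_trans (Nat.le_mul_of_pos_right r hs) hrsM
        have hsM : s ≤ M := le_trans (Nat.le_mul_of_pos_left s hr) hrsM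
        exact ⟨⟨Finset.mem_Icc.mpr ⟨hr, hrM⟩, Finset.mem_Icc.mpr ⟨hs, hsM⟩⟩, hrsM, hrs⟩
      · rw [hFdef]
        simp only [Finset.mem_filter, Nat.mem_primeFactors]
        exact ⟨⟨hpp, hdvd, natAbs_pow_sub_ne_zero' hrs (by omega)⟩, hep⟩
  have hfin : (badPrimes D R).Finite := Set.Finite.subset B.finite_toSet hsub
  refine ⟨hfin, ?_⟩
  have hcard : ((badPrimes D R).ncard : ℝ) ≤ (B.card : ℝ) := by
    have h := Set.ncard_le_ncard hsub B.finite_toSet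
    rw [Set.ncard_coe_finset] at h
    exact_mod_cast h
  -- basic real facts
  have hlD : (0:ℝ) < Real.log D := Real.log_pos (by linarith)
  have hlR : (0.6931471803:ℝ) < Real.log R :=
    lt_of_lt_of_le Real.log_two_gt_d9 (Real.log_le_log (by norm_num) hR)
  have hM2 : 2 ≤ M := Nat.le_floor (by exact_mod_cast hR)
  have hMR : (M:ℝ) ≤ R := Nat.floor_le (by linarith)
  have hKD : (K:ℝ) ≤ D + 1 := (Nat.ceil_lt_add_one (by linarith)).le
  have hlogM : Real.log M ≤ Real.log R :=
    Real.log_le_log (by exact_mod_cast Nat.lt_of_lt_of_le Nat.zero_lt_two hM2) hMR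
  -- per-triple bound
  have htri : ∀ t ∈ (Finset.Ico 3 K) ×ˢ P,
      ((F t).card : ℝ) ≤ 2 * Real.log R * (D / Real.log D) := by
    rintro ⟨e, r, s⟩ ht
    rw [Finset.mem_product, Finset.mem_Ico] at ht
    obtain ⟨⟨he3, heK⟩, htP⟩ := ht
    rw [hPdef, Finset.mem_filter, Finset.mem_product] at htP
    obtain ⟨⟨hr, hs⟩, hrsM, hrs⟩ := htP
    have hrM : r ≤ M := (Finset.mem_Icc.mp hr).2
    have hsM : s ≤ M := (Finset.mem_Icc.mp hs).2
    have heD : (e:ℝ) < D := Nat.lt_ceil.mp heK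
    set N := ((r:ℤ)^e - (s:ℤ)^e).natAbs with hNdef
    have hN0 : N ≠ 0 := natAbs_pow_sub_ne_zero' hrs (by omega)
    have hNle : N ≤ 2 * M ^ e := by
      have h1 := Int.natAbs_sub_le ((r:ℤ)^e) ((s:ℤ)^e)
      have h2 : ((r:ℤ)^e).natAbs = r^e := by
        rw [← Nat.cast_pow]; exact Int.natAbs_natCast _
      have h3 : ((s:ℤ)^e).natAbs = s^e := by
        rw [← Nat.cast_pow]; exact Int.natAbs_natCast _
      rw [h2, h3] at h1
      have h4 : r^e ≤ M^e := Nat.pow_le_pow_left hrM e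
      have h5 : s^e ≤ M^e := Nat.pow_le_pow_left hsM e
      omega
    have hlogN : Real.log N ≤ Real.log 2 + e * Real.log M := by
      have h2 : (N:ℝ) ≤ 2 * (M:ℝ)^e := by exact_mod_cast hNle
      have hMpos : (0:ℝ) < (M:ℝ) := by exact_mod_cast Nat.lt_of_lt_of_le Nat.zero_lt_two hM2
      calc Real.log N ≤ Real.log (2*(M:ℝ)^e) :=
        Real.log_le_log (by exact_mod_cast Nat.pos_of_ne_zero hN0) h2
      _ = Real.log 2 + e * Real.log M := by
          rw [Real.log_mul (by norm_num) (by positivity), Real.log_pow]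
    have h1e : (1:ℝ) ≤ Real.log e :=
      one_le_log_three'.trans (Real.log_le_log (by norm_num) (by exact_mod_cast he3))
    have home := omega_bound' hN0 (by omega : 1 ≤ e)
    have he1 : (1:ℝ) ≤ (e:ℝ) := by exact_mod_cast Nat.one_le_of_lt (by omega : 1 < e)
    have hlog2R : Real.log 2 ≤ Real.log R := Real.log_le_log (by norm_num) hR
    have hlR0 : (0:ℝ) ≤ Real.log R := by linarith
    have hlogN2 : Real.log N ≤ 2 * (e:ℝ) * Real.log R := by
      have : Real.log 2 + (e:ℝ) * Real.log M ≤ Real.log R + (e:ℝ) * Real.log R := by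
        have := mul_le_mul_of_nonneg_left hlogM (by linarith : (0:ℝ) ≤ (e:ℝ))
        linarith
      nlinarith
    have hstep : ((F (e, r, s)).card : ℝ) ≤ 2 * Real.log R * ((e:ℝ) / Real.log e) := by
      rw [hFdef]
      have hcle : ((((((r:ℤ)^e - (s:ℤ)^e).natAbs).primeFactors.filter
          (fun p => e < p)).card : ℝ)) ≤ Real.log N / Real.log e := by
        rw [le_div_iff₀ (by linarith)]
        exact home
      refine hcle.trans ?_
      rw [div_le_iff₀ (by linarith)]
      have : 2 * Real.log R * ((e:ℝ) / Real.log e) * Real.log e = 2 * Real.log R * (e:ℝ) := by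
        field_simp
      rw [this]
      nlinarith
    refine hstep.trans ?_
    have hmono : (e:ℝ) / Real.log e ≤ D / Real.log D :=
      div_log_mono' (by exact_mod_cast he3) heD.le
    have h2lR : (0:ℝ) ≤ 2 * Real.log R := by linarith
    exact mul_le_mul_of_nonneg_left hmono h2lR
  -- card of B
  have hBcard : (B.card : ℝ) ≤
      (((Finset.Ico 3 K) ×ˢ P).card : ℝ) * (2 * Real.log R * (D / Real.log D))
        + ((M:ℝ) + 1) := by
    have h1 : B.card ≤ (((Finset.Ico 3 K) ×ˢ P).biUnion F).card + (Nat.sqrt M + 1) := by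
      calc B.card ≤ (((Finset.Ico 3 K) ×ˢ P).biUnion F).card
          + (Finset.range (Nat.sqrt M + 1)).card := Finset.card_union_le _ _
      _ = (((Finset.Ico 3 K) ×ˢ P).biUnion F).card + (Nat.sqrt M + 1) := by
          rw [Finset.card_range]
    have h2 : (((Finset.Ico 3 K) ×ˢ P).biUnion F).card ≤
        ∑ t ∈ (Finset.Ico 3 K) ×ˢ P, (F t).card := Finset.card_biUnion_le
    have h3 : ((∑ t ∈ (Finset.Ico 3 K) ×ˢ P, (F t).card : ℕ) : ℝ) ≤
        (((Finset.Ico 3 K) ×ˢ P).card : ℝ) * (2 * Real.log R * (D / Real.log D)) := by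
      rw [Nat.cast_sum]
      calc ∑ t ∈ (Finset.Ico 3 K) ×ˢ P, ((F t).card : ℝ)
          ≤ ∑ _t ∈ (Finset.Ico 3 K) ×ˢ P, (2 * Real.log R * (D / Real.log D)) :=
            Finset.sum_le_sum htri
      _ = (((Finset.Ico 3 K) ×ˢ P).card : ℝ) * (2 * Real.log R * (D / Real.log D)) := by
            rw [Finset.sum_const, nsmul_eq_mul]
    have h4 : ((Nat.sqrt M + 1 : ℕ) : ℝ) ≤ (M:ℝ) + 1 := by
      have := Nat.sqrt_le_self M
      exact_mod_cast Nat.add_le_add_right this 1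
    calc (B.card : ℝ) ≤ ((((Finset.Ico 3 K) ×ˢ P).biUnion F).card : ℝ)
        + ((Nat.sqrt M + 1 : ℕ) : ℝ) := by exact_mod_cast h1
    _ ≤ (((Finset.Ico 3 K) ×ˢ P).card : ℝ) * (2 * Real.log R * (D / Real.log D))
        + ((M:ℝ) + 1) := by
        have h5 : ((((Finset.Ico 3 K) ×ˢ P).biUnion F).card : ℝ) ≤
            (((Finset.Ico 3 K) ×ˢ P).card : ℝ) * (2 * Real.log R * (D / Real.log D)) :=
          le_trans (by exact_mod_cast h2) h3
        linarith
  -- bound for the product card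
  have hprod : (((Finset.Ico 3 K) ×ˢ P).card : ℝ) ≤ (D + 1) * ((M:ℝ) * (1 + Real.log M)) := by
    have h0 : ((Finset.Ico 3 K).card : ℝ) ≤ D + 1 := by
      have hKK : (Finset.Ico 3 K).card ≤ K := by rw [Nat.card_Ico]; omega
      exact le_trans (by exact_mod_cast hKK) hKD
    have h2 := pairs_card_le' M
    have hlM0 : (0:ℝ) ≤ Real.log M := Real.log_natCast_nonneg M
    have h3 : (0:ℝ) ≤ (P.card : ℝ) := Nat.cast_nonneg _
    rw [Finset.card_product, Nat.cast_mul]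
    calc ((Finset.Ico 3 K).card : ℝ) * (P.card : ℝ) ≤ (D + 1) * (P.card : ℝ) :=
      mul_le_mul_of_nonneg_right h0 h3
    _ ≤ (D + 1) * ((M:ℝ) * (1 + Real.log M)) := mul_le_mul_of_nonneg_left h2 (by linarith)
  -- final arithmetic
  set lR := Real.log R with hlRdef
  set lD := Real.log D with hlDdef
  have hA : (((Finset.Ico 3 K) ×ˢ P).card : ℝ) ≤ 3.75 * D * R * lR := by
    refine hprod.trans ?_
    have hlM0 : (0:ℝ) ≤ Real.log M := Real.log_natCast_nonneg M
    have h1 : (1:ℝ) + Real.log M ≤ 2.5 * lR := by nlinarith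
    have hMc : (0:ℝ) ≤ (M:ℝ) := by positivity
    have e1 : (M:ℝ) * (1 + Real.log M) ≤ R * (2.5 * lR) := by nlinarith
    have e2 : D + 1 ≤ 1.5 * D := by linarith
    have e3 : (0:ℝ) ≤ R * (2.5 * lR) := by nlinarith
    calc (D + 1) * ((M:ℝ) * (1 + Real.log M)) ≤ (D + 1) * (R * (2.5 * lR)) :=
      mul_le_mul_of_nonneg_left e1 (by linarith)
    _ ≤ (1.5 * D) * (R * (2.5 * lR)) := mul_le_mul_of_nonneg_right e2 e3
    _ = 3.75 * D * R * lR := by ring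
  have hfrac : (0:ℝ) ≤ 2 * lR * (D / lD) := by
    have : (0:ℝ) ≤ lR := by linarith
    positivity
  have h1 : ((badPrimes D R).ncard : ℝ) ≤
      (3.75 * D * R * lR) * (2 * lR * (D / lD)) + ((M:ℝ) + 1) := by
    refine (hcard.trans hBcard).trans ?_
    have := mul_le_mul_of_nonneg_right hA hfrac
    linarith
  have hexp : ((3.75 * D * R * lR) * (2 * lR * (D / lD)) + ((M:ℝ) + 1)) * lD
      = 7.5 * D^2 * R * lR^2 + ((M:ℝ) + 1) * lD := by
    field_simp
    ring
  have hlDD : lD ≤ D := (Real.log_le_sub_one_of_pos (by linarith)).trans (by linarith)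
  have htail : ((M:ℝ) + 1) * lD ≤ 92.5 * (D^2 * R * lR^2) := by
    have hM1R : (M:ℝ) + 1 ≤ 1.5 * R := by linarith
    have h2 : ((M:ℝ) + 1) * lD ≤ (1.5 * R) * D := by
      have hMc : (0:ℝ) ≤ (M:ℝ) + 1 := by positivity
      exact mul_le_mul hM1R hlDD hlD.le (by linarith)
    have hsq : (0.48:ℝ) ≤ lR^2 := by nlinarith
    nlinarith [sq_nonneg D, mul_nonneg (sq_nonneg D) (by linarith : (0:ℝ) ≤ R),
      mul_nonneg (mul_nonneg (sq_nonneg D) (by linarith : (0:ℝ) ≤ R)) (by linarith : (0:ℝ) ≤ lR^2 - 0.48)]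
  have htot : ((badPrimes D R).ncard : ℝ) * lD ≤ 100 * D^2 * R * lR^2 := by
    have h2 := mul_le_mul_of_nonneg_right h1 hlD.le
    rw [hexp] at h2
    linarith
  rw [le_div_iff₀ hlD]
  exact htot
end
end

section
/- Let p be a prime, λ ∈ (Z/pZ)^*, and let r₀, s₀ be positive integers with r₀ ≡ λ s₀ (mod p) and r₀·s₀ = ρ(λ,p). If r, s are positive integers with r ≡ λ s (mod p) and all of r, s, r₀, s₀ are less than √p, then there exists a positive integer δ with r = δ·r₀ and s = δ·s₀. -/
/-!
Cross-multiplying the two congruences gives `r s₀ ≡ r₀ s (mod p)`, and both sides are below `p`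
because all four numbers are below `√p`; hence `r s₀ = r₀ s`. Minimality of `r₀ s₀` forces
`gcd (r₀, s₀) = 1`, since dividing both by their gcd `g` (a unit mod `p`, as `g ≤ r₀ < p`) gives a
solution of product `r₀ s₀ / g²`. So `r₀ ∣ r`, and the quotient `δ` also satisfies `s = δ s₀`.
-/

open scoped Classical

noncomputable section

theorem rho_le_mul {p : ℕ} {lam : (ZMod p)ˣ} {r s : ℕ} (hr : 0 < r) (hs : 0 < s)
    (hcong : (r : ZMod p) = (lam : ZMod p) * s) : rho p lam ≤ r * s :=
  Nat.sInf_le ⟨r, s, hr, hs, hcong, rfl⟩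

theorem mul_lt_of_lt_sqrt {n a b : ℕ} (ha : (a : ℝ) < Real.sqrt n)
    (hb : (b : ℝ) < Real.sqrt n) : a * b < n := by
  have h : (a : ℝ) * b < Real.sqrt n * Real.sqrt n :=
    mul_lt_mul'' ha hb (Nat.cast_nonneg a) (Nat.cast_nonneg b)
  rw [Real.mul_self_sqrt (Nat.cast_nonneg n)] at h
  exact_mod_cast h

theorem cross_mul_eq_of_natCast_eq_mul {n : ℕ} {c : ZMod n} {r s r₀ s₀ : ℕ}
    (hcong : (r : ZMod n) = c * s) (hcong₀ : (r₀ : ZMod n) = c * s₀)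
    (h : r * s₀ < n) (h₀ : r₀ * s < n) : r * s₀ = r₀ * s := by
  have hz : ((r * s₀ : ℕ) : ZMod n) = ((r₀ * s : ℕ) : ZMod n) := by
    push_cast
    rw [hcong, hcong₀]
    ring
  rw [ZMod.natCast_eq_natCast_iff', Nat.mod_eq_of_lt h, Nat.mod_eq_of_lt h₀] at hz
  exact hz

theorem coprime_of_mul_eq_rho {p : ℕ} (hp : p.Prime) {lam : (ZMod p)ˣ} {r₀ s₀ : ℕ}
    (hr₀ : 0 < r₀) (hs₀ : 0 < s₀) (hr₀p : r₀ < p)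
    (hcong₀ : (r₀ : ZMod p) = (lam : ZMod p) * s₀) (hmin : r₀ * s₀ = rho p lam) :
    Nat.Coprime r₀ s₀ := by
  have := Fact.mk hp
  set g := Nat.gcd r₀ s₀
  obtain ⟨a, ha⟩ : g ∣ r₀ := Nat.gcd_dvd_left r₀ s₀
  obtain ⟨b, hb⟩ : g ∣ s₀ := Nat.gcd_dvd_right r₀ s₀
  have hg : (g : ZMod p) ≠ 0 := by
    rw [Ne, ZMod.natCast_eq_zero_iff]
    exact Nat.not_dvd_of_pos_of_lt (Nat.gcd_pos_of_pos_left _ hr₀)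
      ((Nat.gcd_le_left _ hr₀).trans_lt hr₀p)
  have hcong : (a : ZMod p) = (lam : ZMod p) * b := by
    apply mul_left_cancel₀ hg
    rw [ha, hb] at hcong₀
    push_cast at hcong₀
    rw [hcong₀]
    ring
  have ha0 : 0 < a := Nat.pos_of_mul_pos_left (ha ▸ hr₀)
  have hb0 : 0 < b := Nat.pos_of_mul_pos_left (hb ▸ hs₀)
  have hle : g * g * (a * b) ≤ 1 * 1 * (a * b) := by
    calc g * g * (a * b) = (g * a) * (g * b) := by ring
      _ = r₀ * s₀ := by rw [← ha, ← hb]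
      _ ≤ a * b := hmin ▸ rho_le_mul ha0 hb0 hcong
      _ = 1 * 1 * (a * b) := by ring
  have hg1 : g ≤ 1 :=
    Nat.mul_self_le_mul_self_iff.mp (Nat.le_of_mul_le_mul_right hle (Nat.mul_pos ha0 hb0))
  exact le_antisymm hg1 (Nat.gcd_pos_of_pos_left s₀ hr₀)

theorem Nat.Coprime.exists_eq_mul_of_mul_eq_mul {r₀ s₀ r s : ℕ} (hco : Nat.Coprime r₀ s₀)
    (hr₀ : 0 < r₀) (hr : 0 < r) (heq : r * s₀ = r₀ * s) :
    ∃ δ : ℕ, 0 < δ ∧ r = δ * r₀ ∧ s = δ * s₀ := by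
  obtain ⟨δ, rfl⟩ : r₀ ∣ r := hco.dvd_of_dvd_mul_right ⟨s, heq⟩
  refine ⟨δ, Nat.pos_of_mul_pos_left hr, mul_comm _ _, ?_⟩
  rw [mul_assoc] at heq
  exact (Nat.eq_of_mul_eq_mul_left hr₀ heq).symm

theorem small_solutions_proportional_general (p : ℕ) (hp : p.Prime) (lam : (ZMod p)ˣ)
    (r₀ s₀ r s : ℕ) (hr₀ : 0 < r₀) (hs₀ : 0 < s₀)
    (hcong₀ : (r₀ : ZMod p) = (lam : ZMod p) * s₀) (hmin : r₀ * s₀ = rho p lam)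
    (hr : 0 < r) (hcong : (r : ZMod p) = (lam : ZMod p) * s)
    (hr2 : (r : ℝ) < Real.sqrt p) (hs2 : (s : ℝ) < Real.sqrt p)
    (hr₀2 : (r₀ : ℝ) < Real.sqrt p) (hs₀2 : (s₀ : ℝ) < Real.sqrt p) :
    ∃ δ : ℕ, 0 < δ ∧ r = δ * r₀ ∧ s = δ * s₀ := by
  have hsqrt_le : Real.sqrt p ≤ p :=
    Real.sqrt_le_self_iff.mpr (.inr (by exact_mod_cast hp.one_le))
  have hr₀p : r₀ < p := by exact_mod_cast hr₀2.trans_le hsqrt_le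
  have hco : Nat.Coprime r₀ s₀ := coprime_of_mul_eq_rho hp hr₀ hs₀ hr₀p hcong₀ hmin
  have heq : r * s₀ = r₀ * s := cross_mul_eq_of_natCast_eq_mul hcong hcong₀
    (mul_lt_of_lt_sqrt hr2 hs₀2) (mul_lt_of_lt_sqrt hr₀2 hs2)
  exact hco.exists_eq_mul_of_mul_eq_mul hr₀ hr heq

/-- Lemma (structure of small solutions of `r ≡ λ s (mod p)`): if `(r₀, s₀)` attains
`ρ(λ,p)` and `(r,s)` is another positive solution with all of `r, s, r₀, s₀ < √p`, then
`(r,s) = (δ r₀, δ s₀)` for some positive integer `δ`. -/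
theorem small_solutions_proportional (p : ℕ) (hp : p.Prime) (lam : (ZMod p)ˣ)
    (r₀ s₀ r s : ℕ) (hr₀ : 0 < r₀) (hs₀ : 0 < s₀)
    (hcong₀ : (r₀ : ZMod p) = (lam : ZMod p) * s₀) (hmin : r₀ * s₀ = rho p lam)
    (hr : 0 < r) (hs : 0 < s) (hcong : (r : ZMod p) = (lam : ZMod p) * s)
    (hr2 : (r : ℝ) < Real.sqrt p) (hs2 : (s : ℝ) < Real.sqrt p)
    (hr₀2 : (r₀ : ℝ) < Real.sqrt p) (hs₀2 : (s₀ : ℝ) < Real.sqrt p) :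
    ∃ δ : ℕ, 0 < δ ∧ r = δ * r₀ ∧ s = δ * s₀ :=
  small_solutions_proportional_general p hp lam r₀ s₀ r s hr₀ hs₀ hcong₀ hmin hr hcong hr2 hs2 hr₀2
    hs₀2
end
end
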